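/- arXiv:2510.04185 — 2 statements merged into one kernel-verified Lean document; each statement's English description precedes it below -/
import Mathlib

section
/- For every real c > 0, one has (1/(2πi)) ∮_{|z|=1} log(1 + |1 + √c·z|²) / z² dz = Σ_{k=1}^∞ ( √c/(2+c) )^{2k−1} · (2k−2)! / (k!(k−1)!), where the series on the right converges absolutely. -/
open Real Finset intervalIntegral

-- ### Catalan generating function

lemma centralBinom_le_four_pow (n : ℕ) : n.centralBinom ≤ 4 ^ n := by
  have h : (2 * n).choose n ≤ ∑ m ∈ range (2 * n + 1), (2 * n).choose m :=
    Finset.single_le_sum (fun i _ => Nat.zero_le _)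
      (Finset.mem_range.mpr (by omega : n < 2 * n + 1))
  calc n.centralBinom = (2 * n).choose n := n.centralBinom_eq_two_mul_choose
    _ ≤ 2 ^ (2 * n) := by rw [← Nat.sum_range_choose (2 * n)]; exact h
    _ = 4 ^ n := by rw [pow_mul]; norm_num

lemma catalan_le_four_pow (n : ℕ) : (catalan n : ℝ) ≤ 4 ^ n := by
  have h1 : catalan n ≤ n.centralBinom := by
    have := succ_mul_catalan_eq_centralBinom n
    nlinarith
  have h2 := centralBinom_le_four_pow n
  exact_mod_cast h1.trans h2

lemma catalan_summable {x : ℝ} (hx0 : 0 ≤ x) (hx : x < 1 / 4) :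
    Summable (fun k : ℕ => (catalan k : ℝ) * x ^ k) := by
  apply Summable.of_nonneg_of_le (fun k => by positivity)
    (fun k => ?_)
    (summable_geometric_of_lt_one (by positivity) (by linarith) :
      Summable fun k : ℕ => (4 * x) ^ k)
  rw [mul_pow]
  exact mul_le_mul_of_nonneg_right (catalan_le_four_pow k) (by positivity)

lemma catalan_tsum_eq {x : ℝ} (hx0 : 0 < x) (hx : x < 1 / 6) :
    ∑' k : ℕ, (catalan k : ℝ) * x ^ k = (1 - Real.sqrt (1 - 4 * x)) / (2 * x) := by
  have hx4 : x < 1 / 4 := by linarith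
  have hs := catalan_summable hx0.le hx4
  set f : ℝ := ∑' k : ℕ, (catalan k : ℝ) * x ^ k with hf
  have hnorm : Summable fun k : ℕ => ‖(catalan k : ℝ) * x ^ k‖ := by
    simpa [abs_of_nonneg, mul_nonneg, hx0.le, Real.norm_eq_abs,
      abs_of_nonneg (by positivity : (0:ℝ) ≤ (catalan _ : ℝ) * x ^ _)] using hs
  have hsq : f * f = ∑' n : ℕ, (catalan (n + 1) : ℝ) * x ^ n := by
    rw [hf, tsum_mul_tsum_eq_tsum_sum_antidiagonal_of_summable_norm hnorm hnorm]
    congr 1; funext n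
    rw [catalan_succ']
    push_cast
    rw [Finset.sum_mul]
    apply Finset.sum_congr rfl
    intro ij hij
    have := Finset.HasAntidiagonal.mem_antidiagonal.mp hij
    rw [← this, pow_add]; ring
  have hshift : x * (f * f) = f - 1 := by
    rw [hsq]
    have hfeq : f = 1 + ∑' n : ℕ, (catalan (n + 1) : ℝ) * x ^ (n + 1) := by
      rw [hf, hs.tsum_eq_zero_add]; simp
    rw [← tsum_mul_left]
    have h2 : ∑' n : ℕ, x * ((catalan (n+1) : ℝ) * x ^ n)
        = ∑' n : ℕ, (catalan (n + 1) : ℝ) * x ^ (n + 1) := by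
      congr 1; funext n; ring
    rw [h2]
    linarith [hfeq]
  have hfle : f ≤ (1 - 4 * x)⁻¹ := by
    rw [hf, ← tsum_geometric_of_lt_one (by positivity) (by linarith : 4 * x < 1)]
    apply Summable.tsum_le_tsum _ hs (summable_geometric_of_lt_one (by positivity) (by linarith))
    intro k
    rw [mul_pow]
    exact mul_le_mul_of_nonneg_right (catalan_le_four_pow k) (by positivity)
  have h2xf : 2 * x * f < 1 := by
    have h14 : (0:ℝ) < 1 - 4 * x := by linarith
    have hb : 2 * x * f ≤ 2 * x * (1 - 4 * x)⁻¹ :=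
      mul_le_mul_of_nonneg_left hfle (by positivity)
    have h2 : 2 * x * (1 - 4 * x)⁻¹ < 1 := by
      rw [mul_inv_lt_iff₀ h14]; ring_nf; linarith
    linarith
  have hsq2 : (1 - 2 * x * f) ^ 2 = 1 - 4 * x := by nlinarith
  have hsqrt : Real.sqrt (1 - 4 * x) = 1 - 2 * x * f := by
    rw [← hsq2, Real.sqrt_sq (by linarith)]
  rw [hsqrt]
  field_simp
  ring

-- ### Basic integral of exp(ikθ)

open Complex in
lemma Jint (k : ℤ) :
    (∫ θ in (0:ℝ)..(2*π), Complex.exp ((k:ℂ) * θ * I)) = if k = 0 then (2*π:ℂ) else 0 := by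
  rcases eq_or_ne k 0 with rfl | hk
  · simp
  · have hc : (k:ℂ) * I ≠ 0 :=
      mul_ne_zero (Int.cast_ne_zero.mpr hk) I_ne_zero
    have harg : ∀ θ : ℝ, (k:ℂ) * θ * I = ((k:ℂ) * I) * θ := fun θ => by ring
    rw [if_neg hk]
    simp_rw [harg]
    rw [integral_exp_mul_complex hc]
    have h1 : Complex.exp ((k:ℂ) * I * (2*(π:ℂ))) = 1 := by
      rw [show (k:ℂ) * I * (2*(π:ℂ)) = (k:ℂ) * (2*(π:ℂ)*I) by ring]
      exact Complex.exp_int_mul_two_pi_mul_I k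
    simp [h1]

lemma habs (r θ : ℝ) :
    ‖1 + (r:ℂ) * Complex.exp (θ * Complex.I)‖ ^ 2
      = 1 + r^2 + 2*r*Real.cos θ := by
  rw [Complex.sq_norm, Complex.normSq_apply]
  simp only [Complex.add_re, Complex.add_im, Complex.mul_re, Complex.mul_im,
    Complex.one_re, Complex.one_im, Complex.ofReal_re, Complex.ofReal_im,
    Complex.exp_ofReal_mul_I_re, Complex.exp_ofReal_mul_I_im]
  nlinarith [Real.sin_sq_add_cos_sq θ]

set_option maxHeartbeats 2000000 in
/-- for every real `c > 0`,
`(1/(2πi)) ∮_{|z|=1} log(1 + |1 + √c·z|²)/z² dz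
  = Σ_{k=1}^∞ (√c/(2+c))^{2k−1} (2k−2)!/(k!(k−1)!)`,
where the series converges absolutely (nonnegative terms).  The series over
`k ≥ 1` is written as a `tsum` over `ℕ` via the shift `k ↦ k+1`. -/
theorem stmt_14 (c : ℝ) (hc : 0 < c) :
    Summable (fun k : ℕ =>
      (Real.sqrt c / (2 + c)) ^ (2 * (k + 1) - 1) *
        (Nat.factorial (2 * (k + 1) - 2) : ℝ) /
          ((Nat.factorial (k + 1) : ℝ) * (Nat.factorial k : ℝ))) ∧
    (1 / (2 * Real.pi * Complex.I)) *
        (∮ z in C(0, 1),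
          (Real.log (1 + ‖1 + (Real.sqrt c : ℂ) * z‖ ^ 2) : ℂ) / z ^ 2)
      = ((∑' k : ℕ,
            (Real.sqrt c / (2 + c)) ^ (2 * (k + 1) - 1) *
              (Nat.factorial (2 * (k + 1) - 2) : ℝ) /
                ((Nat.factorial (k + 1) : ℝ) * (Nat.factorial k : ℝ)) : ℝ) : ℂ) := by
  have hc2 : (0:ℝ) < 2 + c := by linarith
  have hsc : 0 < Real.sqrt c := Real.sqrt_pos.mpr hc
  have hsc2 : Real.sqrt c ^ 2 = c := Real.sq_sqrt hc.le
  set a : ℝ := Real.sqrt c / (2 + c) with ha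
  have ha0 : 0 < a := div_pos hsc hc2
  have ha6 : a ^ 2 < 1 / 6 := by
    rw [ha, div_pow, div_lt_iff₀ (by positivity)]
    nlinarith [sq_nonneg (c - 1)]
  have h4a : 4 * a ^ 2 < 1 := by nlinarith
  set s : ℝ := Real.sqrt (1 - 4 * a ^ 2) with hsdef
  have hs0 : 0 ≤ s := Real.sqrt_nonneg _
  have hs2 : s ^ 2 = 1 - 4 * a ^ 2 := Real.sq_sqrt (by linarith)
  have hs1 : s < 1 := by nlinarith [hs2, hs0, ha0, sq_nonneg a]
  set α : ℝ := (1 - s) / (2 * a) with hαdef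
  have hα0 : 0 < α := div_pos (by linarith) (by linarith)
  have hα1 : α < 1 := by
    rw [hαdef, div_lt_one (by linarith)]
    nlinarith [sq_nonneg (s + 2*a - 1), sq_nonneg (2*a - 1)]
  have hkey : a * (1 + α ^ 2) = α := by
    rw [hαdef]
    field_simp
    nlinarith
  -- the sum side
  have hterm : ∀ k : ℕ,
      a ^ (2 * (k + 1) - 1) * (Nat.factorial (2 * (k + 1) - 2) : ℝ) /
          ((Nat.factorial (k + 1) : ℝ) * (Nat.factorial k : ℝ))
        = a * ((catalan k : ℝ) * (a ^ 2) ^ k) := by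
    intro k
    have e1 : 2 * (k + 1) - 1 = 2 * k + 1 := by omega
    have e2 : 2 * (k + 1) - 2 = 2 * k := by omega
    have hnat : catalan k * ((k+1).factorial * k.factorial) = (2 * k).factorial := by
      have h1 : (k + 1) * catalan k = (2 * k).choose k := by
        rw [succ_mul_catalan_eq_centralBinom, Nat.centralBinom_eq_two_mul_choose]
      have h2 : (2 * k).choose k * k.factorial * (2 * k - k).factorial = (2 * k).factorial :=
        Nat.choose_mul_factorial_mul_factorial (by omega)
      have h3 : 2 * k - k = k := by omega
      rw [h3] at h2
      calc catalan k * ((k+1).factorial * k.factorial)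
          = ((k + 1) * catalan k) * k.factorial * k.factorial := by
            rw [Nat.factorial_succ]; ring
        _ = (2 * k).choose k * k.factorial * k.factorial := by rw [h1]
        _ = (2 * k).factorial := h2
    rw [e1, e2]
    have hfact : ((2 * k).factorial : ℝ)
        = (catalan k : ℝ) * ((k+1).factorial * k.factorial) := by
      exact_mod_cast hnat.symm
    rw [hfact]
    have hne1 : ((k+1).factorial : ℝ) ≠ 0 := by positivity
    have hne2 : ((k).factorial : ℝ) ≠ 0 := by positivity
    field_simp
    rw [pow_succ, pow_mul]
    ring
  have hsummable : Summable (fun k : ℕ =>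
      a ^ (2 * (k + 1) - 1) * (Nat.factorial (2 * (k + 1) - 2) : ℝ) /
        ((Nat.factorial (k + 1) : ℝ) * (Nat.factorial k : ℝ))) := by
    have := (catalan_summable (x := a ^ 2) (by positivity) (by linarith)).mul_left a
    exact this.congr (fun k => (hterm k).symm)
  have htsum : (∑' k : ℕ,
      a ^ (2 * (k + 1) - 1) * (Nat.factorial (2 * (k + 1) - 2) : ℝ) /
        ((Nat.factorial (k + 1) : ℝ) * (Nat.factorial k : ℝ))) = α := by
    rw [tsum_congr hterm, tsum_mul_left,
      catalan_tsum_eq (by positivity) (by linarith), hαdef, ← hsdef]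
    field_simp
  refine ⟨hsummable, ?_⟩
  -- the integral side
  set w : ℝ → ℂ := fun θ => Complex.exp ((θ:ℂ) * Complex.I) with hw
  set v : ℝ → ℂ := fun θ => Complex.exp (-((θ:ℂ) * Complex.I)) with hv
  have hwcont : Continuous w := by
    rw [hw]; exact Complex.continuous_exp.comp (Complex.continuous_ofReal.mul continuous_const)
  have hvcont : Continuous v := by
    rw [hv]; exact Complex.continuous_exp.comp (Complex.continuous_ofReal.mul continuous_const).neg
  have hwabs : ∀ θ : ℝ, ‖w θ‖ = 1 := fun θ => Complex.norm_exp_ofReal_mul_I θ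
  have hvabs : ∀ θ : ℝ, ‖v θ‖ = 1 := by
    intro θ
    rw [hv]
    show ‖Complex.exp (-((θ:ℂ) * Complex.I))‖ = 1
    rw [show -((θ:ℂ)*Complex.I) = ((-θ : ℝ):ℂ) * Complex.I by push_cast; ring]
    exact Complex.norm_exp_ofReal_mul_I _
  have hwnorm : ∀ θ : ℝ, ‖w θ‖ = 1 := fun θ => by rw [hwabs θ]
  have hvnorm : ∀ θ : ℝ, ‖v θ‖ = 1 := fun θ => by rw [hvabs θ]
  set l : ℝ := Real.sqrt c / α with hldef
  have hl0 : 0 < l := div_pos hsc hα0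
  have hl2 : l * α = Real.sqrt c := by rw [hldef]; field_simp
  have hkey2 : Real.sqrt c * (1 + α ^ 2) = α * (2 + c) := by
    have h := hkey
    rw [ha] at h
    field_simp at h
    linarith
  have hl1 : l * (1 + α ^ 2) = 2 + c := by
    rw [hldef, div_mul_eq_mul_div, div_eq_iff hα0.ne', hkey2]; ring
  -- pointwise log identity
  have hlog : ∀ θ : ℝ,
      Real.log (1 + ‖1 + (Real.sqrt c : ℂ) * w θ‖ ^ 2)
        = Real.log l + 2 * (Complex.log (1 + (α:ℂ) * w θ)).re := by
    intro θ
    have hA : ‖1 + (α:ℂ) * w θ‖ ^ 2 = 1 + α^2 + 2*α*Real.cos θ := habs α θ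
    have hApos : 0 < 1 + α^2 + 2*α*Real.cos θ := by
      nlinarith [Real.neg_one_le_cos θ, Real.cos_le_one θ, sq_nonneg (1 - α)]
    have habs0 : 0 < ‖1 + (α:ℂ) * w θ‖ := by
      rcases (norm_nonneg (1 + (α:ℂ) * w θ)).lt_or_eq with h | h
      · exact h
      · exfalso; rw [← h] at hA; nlinarith
    have hsum : 1 + ‖1 + ((Real.sqrt c : ℝ):ℂ) * w θ‖ ^ 2
        = l * (1 + α^2 + 2*α*Real.cos θ) := by
      rw [hw]
      show 1 + ‖1 + ((Real.sqrt c : ℝ):ℂ) * Complex.exp ((θ:ℂ) * Complex.I)‖ ^ 2 = _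
      rw [habs (Real.sqrt c) θ]
      linear_combination hsc2 - hl1 - 2*Real.cos θ * hl2
    rw [hsum, Real.log_mul hl0.ne' hApos.ne', ← hA, Real.log_pow, Complex.log_re]
    push_cast
    ring
  -- pointwise HasSum
  have hpoint : ∀ θ : ℝ, HasSum (fun n : ℕ => Complex.I * v θ *
      ((-1:ℂ)^(n+1) * ((α:ℂ) * w θ)^n / n + (-1:ℂ)^(n+1) * ((α:ℂ) * v θ)^n / n))
      (Complex.I * v θ * ((2 * (Complex.log (1 + (α:ℂ) * w θ)).re : ℝ) : ℂ)) := by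
    intro θ
    have hn1 : ‖(α:ℂ) * w θ‖ < 1 := by
      rw [norm_mul, hwnorm θ, mul_one, Complex.norm_real, Real.norm_eq_abs,
        abs_of_pos hα0]
      exact hα1
    have hn2 : ‖(α:ℂ) * v θ‖ < 1 := by
      rw [norm_mul, hvnorm θ, mul_one, Complex.norm_real, Real.norm_eq_abs,
        abs_of_pos hα0]
      exact hα1
    have h1 := Complex.hasSum_taylorSeries_log hn1
    have h2 := Complex.hasSum_taylorSeries_log hn2
    have hconjw : (starRingEnd ℂ) (w θ) = v θ := by
      rw [hw, hv]
      show (starRingEnd ℂ) (Complex.exp ((θ:ℂ) * Complex.I)) = _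
      rw [← Complex.exp_conj, map_mul, Complex.conj_ofReal, Complex.conj_I]
      congr 1; ring
    have hcw : 1 + (α:ℂ) * v θ = (starRingEnd ℂ) (1 + (α:ℂ) * w θ) := by
      rw [map_add, map_mul, map_one, Complex.conj_ofReal, hconjw]
    have hre : (1 + (α:ℂ) * w θ).re = 1 + α * Real.cos θ := by
      rw [hw]
      simp [Complex.add_re, Complex.mul_re, Complex.exp_ofReal_mul_I_re,
        Complex.exp_ofReal_mul_I_im]
    have hargpi : (1 + (α:ℂ) * w θ).arg ≠ π := by
      rw [Ne, Complex.arg_eq_pi_iff]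
      rintro ⟨hr, -⟩
      rw [hre] at hr
      nlinarith [Real.neg_one_le_cos θ]
    have h2' : Complex.log (1 + (α:ℂ) * v θ)
        = (starRingEnd ℂ) (Complex.log (1 + (α:ℂ) * w θ)) := by
      rw [hcw, Complex.log_conj _ hargpi]
    have hadd := h1.add h2
    rw [h2', Complex.add_conj] at hadd
    convert hadd.mul_left (Complex.I * v θ) using 2
  set F : ℕ → ℝ → ℂ := fun n θ => Complex.I * v θ *
      ((-1:ℂ)^(n+1) * ((α:ℂ) * w θ)^n / n + (-1:ℂ)^(n+1) * ((α:ℂ) * v θ)^n / n) with hF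
  have hFcont : ∀ n, Continuous (F n) := by
    intro n
    rw [hF]
    exact (continuous_const.mul hvcont).mul
      (((continuous_const.mul ((continuous_const.mul hwcont).pow n)).div_const _).add
        ((continuous_const.mul ((continuous_const.mul hvcont).pow n)).div_const _))
  have key_bound : ∀ (n : ℕ) (z : ℂ), ‖z‖ = 1 → ‖(-1:ℂ)^(n+1) * ((α:ℂ) * z)^n / n‖ ≤ α ^ n := by
    intro n z hz
    simp only [norm_div, norm_mul, norm_pow, norm_neg, norm_one, one_pow, one_mul, hz,
      mul_one, Complex.norm_real, Real.norm_eq_abs, Complex.norm_natCast]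
    rw [abs_of_pos hα0]
    cases n with
    | zero => simp
    | succ m =>
      apply div_le_self (by positivity)
      exact_mod_cast Nat.one_le_iff_ne_zero.mpr (Nat.succ_ne_zero m)
  have hFbound : ∀ n θ, ‖F n θ‖ ≤ 2 * α ^ n := by
    intro n θ
    rw [hF]
    show ‖Complex.I * v θ * _‖ ≤ _
    rw [norm_mul, norm_mul, Complex.norm_I, one_mul, hvnorm θ, one_mul]
    calc ‖_ + _‖ ≤ ‖(-1:ℂ)^(n+1) * ((α:ℂ) * w θ)^n / n‖
          + ‖(-1:ℂ)^(n+1) * ((α:ℂ) * v θ)^n / n‖ := norm_add_le _ _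
      _ ≤ α ^ n + α ^ n := add_le_add (key_bound n _ (hwnorm θ)) (key_bound n _ (hvnorm θ))
      _ = 2 * α ^ n := by ring
  have hswap : HasSum (fun n => ∫ θ in (0:ℝ)..(2*π), F n θ)
      (∫ θ in (0:ℝ)..(2*π),
        Complex.I * v θ * ((2 * (Complex.log (1 + (α:ℂ) * w θ)).re : ℝ) : ℂ)) := by
    apply intervalIntegral.hasSum_integral_of_dominated_convergence
      (bound := fun n _ => 2 * α ^ n)
    · exact fun n => (hFcont n).aestronglyMeasurable
    · exact fun n => MeasureTheory.ae_of_all _ (fun θ _ => hFbound n θ)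
    · exact MeasureTheory.ae_of_all _
        (fun θ _ => (summable_geometric_of_lt_one hα0.le hα1).mul_left 2)
    · exact intervalIntegrable_const
    · exact MeasureTheory.ae_of_all _ (fun θ _ => hpoint θ)
  have hFn : ∀ n : ℕ, (∫ θ in (0:ℝ)..(2*π), F n θ)
      = if n = 1 then (2*π*Complex.I*(α:ℂ)) else 0 := by
    intro n
    have e1 : ∀ θ : ℝ, Complex.exp ((((n:ℤ) - 1 : ℤ):ℂ) * θ * Complex.I) = w θ ^ n * v θ := by
      intro θ
      rw [hw, hv]
      show _ = Complex.exp ((θ:ℂ) * Complex.I) ^ n * Complex.exp (-((θ:ℂ) * Complex.I))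
      rw [← Complex.exp_nat_mul, ← Complex.exp_add]
      congr 1; push_cast; ring
    have e2 : ∀ θ : ℝ, Complex.exp (((-(n:ℤ) - 1 : ℤ):ℂ) * θ * Complex.I) = v θ ^ n * v θ := by
      intro θ
      rw [hv]
      show _ = Complex.exp (-((θ:ℂ) * Complex.I)) ^ n * Complex.exp (-((θ:ℂ) * Complex.I))
      rw [← Complex.exp_nat_mul, ← Complex.exp_add]
      congr 1; push_cast; ring
    have hrw : ∀ θ : ℝ, F n θ = (Complex.I * ((-1:ℂ)^(n+1) * (α:ℂ)^n / n)) *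
        (Complex.exp ((((n:ℤ) - 1 : ℤ):ℂ) * θ * Complex.I)
          + Complex.exp (((-(n:ℤ) - 1 : ℤ):ℂ) * θ * Complex.I)) := by
      intro θ
      rw [e1 θ, e2 θ, hF]
      show Complex.I * v θ * _ = _
      ring
    have hcont1 : Continuous fun θ : ℝ =>
        Complex.exp ((((n:ℤ) - 1 : ℤ):ℂ) * θ * Complex.I) :=
      Complex.continuous_exp.comp ((continuous_const.mul Complex.continuous_ofReal).mul
        continuous_const)
    have hcont2 : Continuous fun θ : ℝ =>
        Complex.exp (((-(n:ℤ) - 1 : ℤ):ℂ) * θ * Complex.I) :=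
      Complex.continuous_exp.comp ((continuous_const.mul Complex.continuous_ofReal).mul
        continuous_const)
    rw [intervalIntegral.integral_congr (g := fun θ => (Complex.I * ((-1:ℂ)^(n+1) * (α:ℂ)^n / n)) *
        (Complex.exp ((((n:ℤ) - 1 : ℤ):ℂ) * θ * Complex.I)
          + Complex.exp (((-(n:ℤ) - 1 : ℤ):ℂ) * θ * Complex.I))) (fun θ _ => hrw θ),
      intervalIntegral.integral_const_mul,
      intervalIntegral.integral_add (hcont1.intervalIntegrable _ _)
        (hcont2.intervalIntegrable _ _),
      Jint ((n:ℤ) - 1), Jint (-(n:ℤ) - 1)]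
    have h2 : ¬(-(n:ℤ) - 1 = 0) := by omega
    rw [if_neg h2, add_zero]
    by_cases hn : n = 1
    · subst hn
      rw [if_pos (by norm_num), if_pos rfl]
      norm_num
      ring
    · have hn' : ¬((n:ℤ) - 1 = 0) := by omega
      rw [if_neg hn', if_neg hn, mul_zero]
  have hFsum : HasSum (fun n => ∫ θ in (0:ℝ)..(2*π), F n θ) (2*π*Complex.I*(α:ℂ)) := by
    have hs := hasSum_single (f := fun n => ∫ θ in (0:ℝ)..(2*π), F n θ) 1
      (fun n hn => by rw [hFn n, if_neg hn])
    simpa [hFn 1] using hs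
  have hI2 : (∫ θ in (0:ℝ)..(2*π),
      Complex.I * v θ * ((2 * (Complex.log (1 + (α:ℂ) * w θ)).re : ℝ) : ℂ))
      = 2*π*Complex.I*(α:ℂ) := (hFsum.unique hswap).symm
  have hvint : (∫ θ in (0:ℝ)..(2*π), v θ) = 0 := by
    have hv1 : ∀ θ : ℝ, v θ = Complex.exp ((((-1:ℤ)):ℂ) * θ * Complex.I) := by
      intro θ; rw [hv]
      show Complex.exp (-((θ:ℂ) * Complex.I)) = _
      congr 1; push_cast; ring
    rw [intervalIntegral.integral_congr (g := fun θ =>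
      Complex.exp ((((-1:ℤ)):ℂ) * θ * Complex.I)) (fun θ _ => hv1 θ), Jint (-1)]
    norm_num
  have hgRcont : Continuous (fun θ : ℝ => Real.log (1 + ‖1 + (Real.sqrt c : ℂ) * w θ‖ ^ 2)) := by
    apply Continuous.log
    · exact continuous_const.add ((continuous_norm.comp
        (continuous_const.add (continuous_const.mul hwcont))).pow 2)
    · intro θ
      have := norm_nonneg (1 + (Real.sqrt c : ℂ) * w θ)
      positivity
  have hsplit : ∀ θ : ℝ,
      Complex.I * v θ * ((Real.log (1 + ‖1 + (Real.sqrt c : ℂ) * w θ‖ ^ 2) : ℝ) : ℂ)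
        = Complex.I * v θ * ((2 * (Complex.log (1 + (α:ℂ) * w θ)).re : ℝ) : ℂ)
          + ((Real.log l : ℝ) : ℂ) * (Complex.I * v θ) := by
    intro θ
    rw [hlog θ]
    push_cast
    ring
  have hint1 : IntervalIntegrable (fun θ : ℝ =>
      Complex.I * v θ * ((2 * (Complex.log (1 + (α:ℂ) * w θ)).re : ℝ) : ℂ)) MeasureTheory.volume 0 (2*π) := by
    have hc1 : Continuous (fun θ : ℝ =>
        Complex.I * v θ * ((2 * (Complex.log (1 + (α:ℂ) * w θ)).re : ℝ) : ℂ)) := by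
      apply (continuous_const.mul hvcont).mul
      apply Complex.continuous_ofReal.comp
      apply continuous_const.mul
      have : ∀ θ : ℝ, (Complex.log (1 + (α:ℂ) * w θ)).re
          = Real.log (‖1 + (α:ℂ) * w θ‖) := fun θ => Complex.log_re _
      rw [show (fun θ : ℝ => (Complex.log (1 + (α:ℂ) * w θ)).re)
          = fun θ : ℝ => Real.log (‖1 + (α:ℂ) * w θ‖) from funext this]
      apply Continuous.log
      · exact continuous_norm.comp (continuous_const.add (continuous_const.mul hwcont))
      · intro θ
        have hA : ‖1 + (α:ℂ) * w θ‖ ^ 2 = 1 + α^2 + 2*α*Real.cos θ := habs α θ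
        have hApos : 0 < 1 + α^2 + 2*α*Real.cos θ := by
          nlinarith [Real.neg_one_le_cos θ, Real.cos_le_one θ, sq_nonneg (1 - α)]
        intro h0
        rw [h0] at hA
        nlinarith
    exact hc1.intervalIntegrable _ _
  have hint2 : IntervalIntegrable (fun θ : ℝ =>
      ((Real.log l : ℝ) : ℂ) * (Complex.I * v θ)) MeasureTheory.volume 0 (2*π) :=
    ((continuous_const.mul (continuous_const.mul hvcont)) : Continuous _).intervalIntegrable _ _
  have hmain : (∮ z in C(0, 1),
      (Real.log (1 + ‖1 + (Real.sqrt c : ℂ) * z‖ ^ 2) : ℂ) / z ^ 2)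
      = 2*π*Complex.I*(α:ℂ) := by
    rw [circleIntegral]
    rw [intervalIntegral.integral_congr (g := fun θ : ℝ =>
      Complex.I * v θ * ((Real.log (1 + ‖1 + (Real.sqrt c : ℂ) * w θ‖ ^ 2) : ℝ) : ℂ))
      ?_]
    · rw [intervalIntegral.integral_congr (g := fun θ : ℝ =>
        Complex.I * v θ * ((2 * (Complex.log (1 + (α:ℂ) * w θ)).re : ℝ) : ℂ)
          + ((Real.log l : ℝ) : ℂ) * (Complex.I * v θ)) (fun θ _ => hsplit θ)]
      rw [intervalIntegral.integral_add hint1 hint2, hI2]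
      have h0 : (∫ θ in (0:ℝ)..(2*π), ((Real.log l : ℝ) : ℂ) * (Complex.I * v θ)) = 0 := by
        have : ∀ θ : ℝ, ((Real.log l : ℝ) : ℂ) * (Complex.I * v θ)
            = (((Real.log l : ℝ) : ℂ) * Complex.I) * v θ := fun θ => by ring
        rw [intervalIntegral.integral_congr (g := fun θ : ℝ =>
          (((Real.log l : ℝ) : ℂ) * Complex.I) * v θ) (fun θ _ => this θ),
          intervalIntegral.integral_const_mul, hvint, mul_zero]
      rw [h0, add_zero]
    · intro θ _
      simp only [deriv_circleMap, circleMap, Complex.ofReal_one, Complex.ofReal_zero,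
        zero_add, one_mul, smul_eq_mul]
      have hwne : Complex.exp ((θ:ℂ) * Complex.I) ≠ 0 := Complex.exp_ne_zero _
      have hinv : v θ = (Complex.exp ((θ:ℂ) * Complex.I))⁻¹ := by
        rw [hv]; exact Complex.exp_neg _
      rw [hw]
      show Complex.exp ((θ:ℂ) * Complex.I) * Complex.I * (_ / Complex.exp ((θ:ℂ) * Complex.I) ^ 2)
          = Complex.I * v θ * _
      rw [hinv]
      field_simp
  rw [hmain, htsum]
  have hπ : (π : ℂ) ≠ 0 := Complex.ofReal_ne_zero.mpr Real.pi_ne_zero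
  field_simp
end

section
/- For every real c > 0, writing t = c̃(c): the limit as r → 1 from above of (1/(2πi)) ∮_{|z|=1} (1 / (1 + |1 + √c·z|²)) · z / (z² − r^{−2}) dz exists and equals (1/(1 + ϱ(c))) · ( −t/(1−t)² + 1/(2(√t − 1)²) + 1/(2(√t + 1)²) ). -/
open Real Filter

/-- `ϱ(c) = (c + √(c² + 4))/2`. -/
noncomputable def varrho (c : ℝ) : ℝ := (c + Real.sqrt (c ^ 2 + 4)) / 2

/-- `c̃(c) = 4c/(2 + c + √(c² + 4))²`. -/
noncomputable def ctil (c : ℝ) : ℝ := 4 * c / (2 + c + Real.sqrt (c ^ 2 + 4)) ^ 2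

set_option maxHeartbeats 1000000 in
lemma pf4 (a b p q z : ℂ) (hab : a ≠ b) (hap : a ≠ p) (haq : a ≠ q)
    (hbp : b ≠ p) (hbq : b ≠ q) (hpq : p ≠ q)
    (hza : z ≠ a) (hzb : z ≠ b) (hzp : z ≠ p) (hzq : z ≠ q) :
    z^2/((z-a)*(z-b)*(z-p)*(z-q)) =
      a^2/((a-b)*(a-p)*(a-q)) / (z-a)
    + b^2/((b-a)*(b-p)*(b-q)) / (z-b)
    + p^2/((p-a)*(p-b)*(p-q)) / (z-p)
    + q^2/((q-a)*(q-b)*(q-p)) / (z-q) := by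
  have hab' : a - b ≠ 0 := sub_ne_zero.2 hab
  have hap' : a - p ≠ 0 := sub_ne_zero.2 hap
  have haq' : a - q ≠ 0 := sub_ne_zero.2 haq
  have hbp' : b - p ≠ 0 := sub_ne_zero.2 hbp
  have hbq' : b - q ≠ 0 := sub_ne_zero.2 hbq
  have hpq' : p - q ≠ 0 := sub_ne_zero.2 hpq
  have hza' : z - a ≠ 0 := sub_ne_zero.2 hza
  have hzb' : z - b ≠ 0 := sub_ne_zero.2 hzb
  have hzp' : z - p ≠ 0 := sub_ne_zero.2 hzp
  have hzq' : z - q ≠ 0 := sub_ne_zero.2 hzq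
  set D : ℂ := (a-b)*(a-p)*(a-q)*((b-p)*(b-q)*(p-q)) with hD_def
  have hD : D ≠ 0 := by
    simp only [hD_def]
    exact mul_ne_zero (mul_ne_zero (mul_ne_zero hab' hap') haq')
      (mul_ne_zero (mul_ne_zero hbp' hbq') hpq')
  set F : ℂ := (z-a)*(z-b)*(z-p)*(z-q) with hF_def
  have e1 : a^2/((a-b)*(a-p)*(a-q)) = (a^2*((b-p)*(b-q)*(p-q)))/D := by
    rw [div_eq_div_iff (mul_ne_zero (mul_ne_zero hab' hap') haq') hD, hD_def]; ring
  have e2 : b^2/((b-a)*(b-p)*(b-q)) = (-(b^2)*((a-p)*(a-q)*(p-q)))/D := by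
    rw [div_eq_div_iff (mul_ne_zero (mul_ne_zero (sub_ne_zero.2 hab.symm) hbp') hbq') hD,
      hD_def]; ring
  have e3 : p^2/((p-a)*(p-b)*(p-q)) = (p^2*((a-b)*(a-q)*(b-q)))/D := by
    rw [div_eq_div_iff (mul_ne_zero (mul_ne_zero (sub_ne_zero.2 hap.symm)
      (sub_ne_zero.2 hbp.symm)) hpq') hD, hD_def]; ring
  have e4 : q^2/((q-a)*(q-b)*(q-p)) = (-(q^2)*((a-b)*(a-p)*(b-p)))/D := by
    rw [div_eq_div_iff (mul_ne_zero (mul_ne_zero (sub_ne_zero.2 haq.symm)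
      (sub_ne_zero.2 hbq.symm)) (sub_ne_zero.2 hpq.symm)) hD, hD_def]; ring
  have t : ∀ (N Q w : ℂ), w - z ≠ 0 → Q ≠ 0 → (D * (z - w) * Q = D * F) →
      N/D/(z-w) = (N*Q)/(D*F) := by
    intro N Q w hw hQ hQF
    rw [div_div, ← hQF, ← mul_div_mul_right (a := N) (b := D * (z-w)) hQ]
  have key : a^2*((b-p)*(b-q)*(p-q)) * ((z-b)*(z-p)*(z-q))
      + (-(b^2)*((a-p)*(a-q)*(p-q))) * ((z-a)*(z-p)*(z-q))
      + p^2*((a-b)*(a-q)*(b-q)) * ((z-a)*(z-b)*(z-q))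
      + (-(q^2)*((a-b)*(a-p)*(b-p))) * ((z-a)*(z-b)*(z-p))
      = z^2 * D := by rw [hD_def]; ring
  rw [e1, e2, e3, e4,
    t _ ((z-b)*(z-p)*(z-q)) a (sub_ne_zero.2 hza.symm)
      (mul_ne_zero (mul_ne_zero hzb' hzp') hzq') (by rw [hF_def]; ring),
    t _ ((z-a)*(z-p)*(z-q)) b (sub_ne_zero.2 hzb.symm)
      (mul_ne_zero (mul_ne_zero hza' hzp') hzq') (by rw [hF_def]; ring),
    t _ ((z-a)*(z-b)*(z-q)) p (sub_ne_zero.2 hzp.symm)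
      (mul_ne_zero (mul_ne_zero hza' hzb') hzq') (by rw [hF_def]; ring),
    t _ ((z-a)*(z-b)*(z-p)) q (sub_ne_zero.2 hzq.symm)
      (mul_ne_zero (mul_ne_zero hza' hzb') hzp') (by rw [hF_def]; ring),
    ← add_div, ← add_div, ← add_div, key,
    mul_comm (z^2) D, mul_div_mul_left _ _ hD]

lemma myintegral_add {f g : ℂ → ℂ} {c : ℂ} {R : ℝ} (hf : CircleIntegrable f c R)
    (hg : CircleIntegrable g c R) :
    (∮ z in C(c, R), (f z + g z)) = (∮ z in C(c, R), f z) + ∮ z in C(c, R), g z := by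
  simp only [circleIntegral, smul_add, intervalIntegral.integral_add hf.out hg.out]

lemma myci (A p : ℂ) (hp : ‖p‖ ≠ 1) :
    CircleIntegrable (fun z => A / (z - p)) 0 1 := by
  apply ContinuousOn.circleIntegrable zero_le_one
  apply ContinuousOn.div continuousOn_const (by fun_prop)
  intro z hz
  have hz1 : ‖z‖ = 1 := by
    simpa using mem_sphere_zero_iff_norm.1 hz
  exact sub_ne_zero.2 fun h => hp (h ▸ hz1)

lemma myint_inside (A p : ℂ) (hp : ‖p‖ < 1) :
    (∮ z in C(0, 1), A / (z - p)) = 2 * Real.pi * Complex.I * A := by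
  simp only [div_eq_mul_inv, ← smul_eq_mul]
  rw [circleIntegral.integral_smul,
    circleIntegral.integral_sub_inv_of_mem_ball (by simpa using hp)]
  simp only [smul_eq_mul]; ring

lemma myint_outside (A p : ℂ) (hp : 1 < ‖p‖) :
    (∮ z in C(0, 1), A / (z - p)) = 0 := by
  apply Complex.circleIntegral_eq_zero_of_differentiable_on_off_countable zero_le_one
    Set.countable_empty
  · apply ContinuousOn.div continuousOn_const (by fun_prop)
    intro z hz
    have hz1 : ‖z‖ ≤ 1 := by
      simpa using mem_closedBall_zero_iff.1 hz
    exact sub_ne_zero.2 fun h => absurd (h ▸ hz1) (not_le.2 hp)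
  · intro z hz
    have hz1 : ‖z‖ < 1 := by
      simpa using mem_ball_zero_iff.1 hz.1
    exact (differentiableAt_const A).div (differentiableAt_id.sub (differentiableAt_const p))
      (sub_ne_zero.2 fun h => absurd (h ▸ hz1) (not_lt.2 hp.le))

lemma integrand_eq (u s ri : ℝ) (hu0 : 0 < u) (hs0 : 0 < s) (hs1 : s < 1)
    (hkey : u * (1 + s ^ 2) = (2 + u ^ 2) * s) (hri0 : 0 < ri) (hri1 : ri < 1)
    (hsri : s < ri) (z : ℂ) (hz1 : ‖z‖ = 1) :
    (1 / (1 + (‖1 + (u : ℂ) * z‖ ^ 2 : ℝ)) : ℂ) * z / (z ^ 2 - ((ri : ℂ)) ^ 2)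
    = (1 / (u : ℂ)) *
        (z ^ 2 / ((z - (ri : ℂ)) * (z - -(ri : ℂ)) * (z - -(s : ℂ)) * (z - -(1 / (s : ℂ))))) := by
  have hz0 : z ≠ 0 := by intro h; simp [h] at hz1
  have hS0 : ((s : ℝ) : ℂ) ≠ 0 := by exact_mod_cast hs0.ne'
  have hU0 : ((u : ℝ) : ℂ) ≠ 0 := by exact_mod_cast hu0.ne'
  have hn : Complex.normSq z = 1 := by rw [← Complex.sq_norm, hz1]; norm_num
  have hconj : (starRingEnd ℂ) z = z⁻¹ := by rw [Complex.inv_def, hn]; simp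
  have e1 : (1 + ((‖1 + (u : ℂ) * z‖ ^ 2 : ℝ) : ℂ))
      = 1 + (1 + (u : ℂ) * z) * (1 + (u : ℂ) * z⁻¹) := by
    rw [Complex.sq_norm, show ((Complex.normSq (1 + (u : ℂ) * z) : ℝ) : ℂ)
        = (1 + (u : ℂ) * z) * (starRingEnd ℂ) (1 + (u : ℂ) * z) from (Complex.mul_conj _).symm]
    congr 1
    rw [map_add, map_mul, map_one, Complex.conj_ofReal, hconj]
  have hNe : (1 + (1 + (u : ℂ) * z) * (1 + (u : ℂ) * z⁻¹)) ≠ 0 := by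
    rw [← e1]
    exact_mod_cast (by positivity : (1 : ℝ) + ‖1 + (u : ℂ) * z‖ ^ 2 ≠ 0)
  have habs : ∀ x : ℝ, |x| ≠ 1 → z - (x : ℂ) ≠ 0 := by
    intro x hx
    refine sub_ne_zero.2 fun h => hx ?_
    rw [h, Complex.norm_real, Real.norm_eq_abs] at hz1; exact hz1
  have h1s : 1 < 1 / s := one_lt_one_div hs0 hs1
  have hzr : z - (ri : ℂ) ≠ 0 := habs ri (by rw [abs_of_pos hri0]; linarith)
  have hzr' : z - -(ri : ℂ) ≠ 0 := by
    rw [← Complex.ofReal_neg]; exact habs _ (by rw [abs_neg, abs_of_pos hri0]; linarith)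
  have hzs : z - -(s : ℂ) ≠ 0 := by
    rw [← Complex.ofReal_neg]; exact habs _ (by rw [abs_neg, abs_of_pos hs0]; linarith)
  have hz1s : z - -(1 / (s : ℂ)) ≠ 0 := by
    rw [show -(1 / (s : ℂ)) = ((-(1 / s) : ℝ) : ℂ) by push_cast; ring]
    exact habs _ (by rw [abs_neg, abs_of_pos (by positivity)]; linarith)
  have hkC : (u : ℂ) * (1 + (s : ℂ) ^ 2) = (2 + (u : ℂ) ^ 2) * (s : ℂ) := by exact_mod_cast hkey
  have hfac : (u : ℂ) * z ^ 2 + (2 + (u : ℂ) ^ 2) * z + (u : ℂ)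
      = (u : ℂ) * (z - -(s : ℂ)) * (z - -(1 / (s : ℂ))) := by
    field_simp
    linear_combination (-z) * hkC
  have hP : (u : ℂ) * z ^ 2 + (2 + (u : ℂ) ^ 2) * z + (u : ℂ) ≠ 0 := by
    rw [hfac]; exact mul_ne_zero (mul_ne_zero hU0 hzs) hz1s
  have hzr2 : z ^ 2 - ((ri : ℂ)) ^ 2 ≠ 0 := by
    rw [show z ^ 2 - ((ri : ℂ)) ^ 2 = (z - (ri : ℂ)) * (z - -(ri : ℂ)) by ring]
    exact mul_ne_zero hzr hzr'
  have e2 : (1 + (1 + (u : ℂ) * z) * (1 + (u : ℂ) * z⁻¹)) * z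
      = (u : ℂ) * z ^ 2 + (2 + (u : ℂ) ^ 2) * z + (u : ℂ) := by
    field_simp; ring
  calc (1 / (1 + (‖1 + (u : ℂ) * z‖ ^ 2 : ℝ)) : ℂ) * z / (z ^ 2 - ((ri : ℂ)) ^ 2)
      = z ^ 2 / (((u : ℂ) * z ^ 2 + (2 + (u : ℂ) ^ 2) * z + (u : ℂ)) * (z ^ 2 - ((ri : ℂ)) ^ 2)) := by
        rw [e1, one_div_mul_eq_div, div_div,
          div_eq_div_iff (mul_ne_zero hNe hzr2) (mul_ne_zero hP hzr2), ← e2]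
        ring
    _ = (1 / (u : ℂ)) *
        (z ^ 2 / ((z - (ri : ℂ)) * (z - -(ri : ℂ)) * (z - -(s : ℂ)) * (z - -(1 / (s : ℂ))))) := by
        rw [one_div_mul_eq_div, div_div]
        congr 1
        rw [hfac]; ring

noncomputable def gfun (u s : ℝ) (w : ℂ) : ℂ :=
  1 / (u : ℂ) * (w ^ 2 / ((w - -w) * (w - -(s : ℂ)) * (w - -(1 / (s : ℂ)))))
  + 1 / (u : ℂ) * ((-w) ^ 2 / ((-w - w) * (-w - -(s : ℂ)) * (-w - -(1 / (s : ℂ)))))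
  + 1 / (u : ℂ) * ((-(s : ℂ)) ^ 2 / ((-(s : ℂ) - w) * (-(s : ℂ) - -w) * (-(s : ℂ) - -(1 / (s : ℂ)))))

lemma real_ident (u s : ℝ) (hu0 : 0 < u) (hs0 : 0 < s) (hs1 : s < 1) :
    (1 / u * (1 ^ 2 / ((1 - -1) * (1 - -s) * (1 - -(1 / s))))
      + 1 / u * ((-1) ^ 2 / ((-1 - 1) * (-1 - -s) * (-1 - -(1 / s))))
      + 1 / u * ((-s) ^ 2 / ((-s - 1) * (-s - -1) * (-s - -(1 / s)))) : ℝ)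
    = s / (u * (1 - s ^ 2) ^ 2) := by
  have hsne : s ≠ 0 := hs0.ne'
  have hune : u ≠ 0 := hu0.ne'
  have e1 : (1 : ℝ) + s ≠ 0 := by positivity
  have e3 : s - 1 ≠ 0 := by intro h; nlinarith
  have e6 : (1 : ℝ) - s ≠ 0 := by intro h; nlinarith
  have e8 : (1 : ℝ) - s ^ 2 ≠ 0 := by nlinarith
  have e9 : -(s * u * 4) + s ^ 2 * u * 2 + u * 2 ≠ 0 := by
    rw [show -(s * u * 4) + s ^ 2 * u * 2 + u * 2 = (2 * u) * (s - 1) ^ 2 from by ring]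
    exact mul_ne_zero (by positivity) (pow_ne_zero 2 e3)
  have e10 : s ^ 2 * u * 2 + (-(s ^ 4 * u) - u) ≠ 0 := by
    rw [show s ^ 2 * u * 2 + (-(s ^ 4 * u) - u) = -(u * (s ^ 2 - 1) ^ 2) from by ring]
    exact neg_ne_zero.2 (mul_ne_zero hune (pow_ne_zero 2 (fun h => e8 (by linarith))))
  have d1 : u * ((-1 - 1) * (-1 + s) * (-s + 1)) ≠ 0 := by
    rw [show u * ((-1 - 1) * (-1 + s) * (-s + 1)) = (2 * u) * (1 - s) ^ 2 from by ring]
    exact mul_ne_zero (by positivity) (pow_ne_zero 2 e6)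
  have d2 : u * ((-s - 1) * (-s + 1) * (-(s * s) + 1)) ≠ 0 := by
    rw [show u * ((-s - 1) * (-s + 1) * (-(s * s) + 1)) = -(u * (1 - s ^ 2) ^ 2) from by ring]
    exact neg_ne_zero.2 (mul_ne_zero hune (pow_ne_zero 2 e8))
  rw [show ((1:ℝ) - -1) * (1 - -s) * (1 - -(1 / s)) = 2*(1+s)^2/s by field_simp; ring,
    show ((-1:ℝ) - 1) * (-1 - -s) * (-1 - -(1 / s)) = 2*(1-s)^2/s by field_simp; ring,
    show (-s - 1) * (-s - -1) * (-s - -(1 / s)) = -(1-s^2)^2/s by field_simp; ring]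
  field_simp
  ring

lemma limit_part (u s : ℝ) (hu0 : 0 < u) (hs0 : 0 < s) (hs1 : s < 1) :
    Tendsto (fun r : ℝ => gfun u s ((r : ℂ))⁻¹) (nhdsWithin 1 (Set.Ioi 1))
      (nhds ((s / (u * (1 - s ^ 2) ^ 2) : ℝ) : ℂ)) := by
  have hs1d : (0 : ℝ) < 1 / s - s := by
    have := one_lt_one_div hs0 hs1; nlinarith
  have hofR : ∀ x : ℝ, x ≠ 0 → (x : ℂ) ≠ 0 := fun x hx => by exact_mod_cast hx
  have h1S : (1 : ℂ) - -(s : ℂ) ≠ 0 := by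
    rw [show (1 : ℂ) - -(s : ℂ) = ((1 + s : ℝ) : ℂ) by push_cast; ring]
    exact hofR _ (by positivity)
  have h1S' : (1 : ℂ) - -(1 / (s : ℂ)) ≠ 0 := by
    rw [show (1 : ℂ) - -(1 / (s : ℂ)) = ((1 + 1 / s : ℝ) : ℂ) by push_cast; ring]
    exact hofR _ (by positivity)
  have hm1S : (-1 : ℂ) - -(s : ℂ) ≠ 0 := by
    rw [show (-1 : ℂ) - -(s : ℂ) = ((s - 1 : ℝ) : ℂ) by push_cast; ring]
    exact hofR _ (by intro h; nlinarith)
  have hm1S' : (-1 : ℂ) - -(1 / (s : ℂ)) ≠ 0 := by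
    rw [show (-1 : ℂ) - -(1 / (s : ℂ)) = ((1 / s - 1 : ℝ) : ℂ) by push_cast; ring]
    exact hofR _ (by intro h; nlinarith [one_lt_one_div hs0 hs1])
  have hS1 : -(s : ℂ) - 1 ≠ 0 := by
    rw [show -(s : ℂ) - 1 = ((-s - 1 : ℝ) : ℂ) by push_cast; ring]
    exact hofR _ (by intro h; nlinarith)
  have hS1' : -(s : ℂ) - -1 ≠ 0 := by
    rw [show -(s : ℂ) - -1 = ((1 - s : ℝ) : ℂ) by push_cast; ring]
    exact hofR _ (by intro h; nlinarith)
  have hSS : -(s : ℂ) - -(1 / (s : ℂ)) ≠ 0 := by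
    rw [show -(s : ℂ) - -(1 / (s : ℂ)) = ((1 / s - s : ℝ) : ℂ) by push_cast; ring]
    exact hofR _ hs1d.ne'
  have h2 : (1 : ℂ) - -1 ≠ 0 := by norm_num
  have h2' : (-1 : ℂ) - 1 ≠ 0 := by norm_num
  have hval : gfun u s 1 = ((s / (u * (1 - s ^ 2) ^ 2) : ℝ) : ℂ) := by
    rw [gfun, show
      1 / (u : ℂ) * ((1:ℂ) ^ 2 / (((1:ℂ) - -1) * ((1:ℂ) - -(s : ℂ)) * ((1:ℂ) - -(1 / (s : ℂ)))))
      + 1 / (u : ℂ) * ((-1:ℂ) ^ 2 / (((-1:ℂ) - 1) * ((-1:ℂ) - -(s : ℂ)) * ((-1:ℂ) - -(1 / (s : ℂ)))))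
      + 1 / (u : ℂ) * ((-(s : ℂ)) ^ 2 / ((-(s : ℂ) - 1) * (-(s : ℂ) - -1) * (-(s : ℂ) - -(1 / (s : ℂ)))))
      = ((1 / u * (1 ^ 2 / ((1 - -1) * (1 - -s) * (1 - -(1 / s))))
        + 1 / u * ((-1) ^ 2 / ((-1 - 1) * (-1 - -s) * (-1 - -(1 / s))))
        + 1 / u * ((-s) ^ 2 / ((-s - 1) * (-s - -1) * (-s - -(1 / s)))) : ℝ) : ℂ) by push_cast; ring]
    exact congrArg Complex.ofReal (real_ident u s hu0 hs0 hs1)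
  have hcont : ContinuousAt (gfun u s) 1 := by
    unfold gfun
    apply ContinuousAt.add
    apply ContinuousAt.add
    · exact continuousAt_const.mul (ContinuousAt.div (by fun_prop) (by fun_prop)
        (by simpa using mul_ne_zero (mul_ne_zero h2 h1S) h1S'))
    · exact continuousAt_const.mul (ContinuousAt.div (by fun_prop) (by fun_prop)
        (by simpa using mul_ne_zero (mul_ne_zero h2' hm1S) hm1S'))
    · exact continuousAt_const.mul (ContinuousAt.div (by fun_prop) (by fun_prop)
        (by simpa using mul_ne_zero (mul_ne_zero hS1 hS1') hSS))
  have hin : Tendsto (fun r : ℝ => ((r : ℂ))⁻¹) (nhds 1) (nhds 1) := by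
    have h := (Complex.continuous_ofReal.tendsto (1 : ℝ)).inv₀ (by norm_num)
    simpa using h
  have h2t : Tendsto (fun r : ℝ => gfun u s ((r : ℂ))⁻¹) (nhds 1) (nhds (gfun u s 1)) :=
    hcont.tendsto.comp hin
  rw [hval] at h2t
  exact h2t.mono_left nhdsWithin_le_nhds


set_option maxHeartbeats 1000000 in
/-- for every real `c > 0`, writing `t = c̃(c)`, the limit as
`r → 1⁺` of `(1/(2πi)) ∮_{|z|=1} (1/(1 + |1 + √c·z|²)) · z/(z² − r^{−2}) dz`
exists and equals
`(1/(1 + ϱ(c)))·(−t/(1−t)² + 1/(2(√t − 1)²) + 1/(2(√t + 1)²))`. -/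
theorem stmt_16 (c : ℝ) (hc : 0 < c) :
    Tendsto
      (fun r : ℝ =>
        (1 / (2 * Real.pi * Complex.I)) *
          ∮ z in C(0, 1),
            (1 / (1 + (‖1 + (Real.sqrt c : ℂ) * z‖ ^ 2 : ℝ)) : ℂ) *
              z / (z ^ 2 - ((r : ℂ) ^ 2)⁻¹))
      (nhdsWithin 1 (Set.Ioi 1))
      (nhds (((1 / (1 + varrho c)) *
        (-(ctil c) / (1 - ctil c) ^ 2 + 1 / (2 * (Real.sqrt (ctil c) - 1) ^ 2) +
          1 / (2 * (Real.sqrt (ctil c) + 1) ^ 2) : ℝ) : ℝ) : ℂ)) := by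
  set u := Real.sqrt c with hu_def
  have hu0 : 0 < u := Real.sqrt_pos.2 hc
  have hu2 : u ^ 2 = c := Real.sq_sqrt hc.le
  set d := Real.sqrt (c ^ 2 + 4) with hd_def
  have hd2 : d ^ 2 = c ^ 2 + 4 := Real.sq_sqrt (by positivity)
  have hd0 : 0 < d := Real.sqrt_pos.2 (by positivity)
  have hden : (0 : ℝ) < 2 + c + d := by linarith
  set s := 2 * u / (2 + c + d) with hs_def
  have hs0 : 0 < s := by positivity
  have hs1 : s < 1 := by
    rw [hs_def, div_lt_one hden]; nlinarith [sq_nonneg (u - 1)]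
  have hct : ctil c = s ^ 2 := by
    rw [ctil, ← hd_def, hs_def, div_pow]
    congr 1
    linear_combination (-4) * hu2
  have hsq : Real.sqrt (ctil c) = s := by rw [hct, Real.sqrt_sq hs0.le]
  have hclear : u * ((2 + c + d) ^ 2 + 4 * u ^ 2) = (2 + c) * (2 * u) * (2 + c + d) := by
    linear_combination u * hd2 + 4 * u * hu2
  have hne : (2 + c + d) ≠ 0 := ne_of_gt hden
  have hkey : u * (1 + s ^ 2) = (2 + u ^ 2) * s := by
    rw [hu2, hs_def, div_pow, one_add_div (pow_ne_zero 2 hne), mul_div_assoc',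
      mul_div_assoc', div_eq_div_iff (pow_ne_zero 2 hne) hne]
    linear_combination (2 + c + d) * hclear
  have hT : ((1 / (1 + varrho c)) *
      (-(ctil c) / (1 - ctil c) ^ 2 + 1 / (2 * (Real.sqrt (ctil c) - 1) ^ 2) +
        1 / (2 * (Real.sqrt (ctil c) + 1) ^ 2)) : ℝ) = s / (u * (1 - s ^ 2) ^ 2) := by
    have hs1' : s - 1 ≠ 0 := by intro h; nlinarith
    have hsp : s + 1 ≠ 0 := by positivity
    have hss : 1 - s ^ 2 ≠ 0 := by nlinarith
    have h2cd : (1 : ℝ) + varrho c = u / s := by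
      rw [varrho, ← hd_def, hs_def]
      field_simp
      ring
    rw [hsq, hct, h2cd]
    field_simp
    ring
  -- eventual equality with gfun
  have hsinv : (1 : ℝ) < s⁻¹ := by rw [← one_div]; exact one_lt_one_div hs0 hs1
  have h2piI : (2 * (Real.pi : ℂ) * Complex.I) ≠ 0 :=
    mul_ne_zero (mul_ne_zero two_ne_zero (Complex.ofReal_ne_zero.2 Real.pi_ne_zero))
      Complex.I_ne_zero
  have hev : (fun r : ℝ => gfun u s ((r : ℂ))⁻¹) =ᶠ[nhdsWithin 1 (Set.Ioi 1)]
      (fun r : ℝ =>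
        (1 / (2 * Real.pi * Complex.I)) *
          ∮ z in C(0, 1),
            (1 / (1 + (‖1 + (u : ℂ) * z‖ ^ 2 : ℝ)) : ℂ) *
              z / (z ^ 2 - ((r : ℂ) ^ 2)⁻¹)) := by
    filter_upwards [Ioo_mem_nhdsGT_of_mem (Set.left_mem_Ico.2 hsinv)] with r hr
    have hr1 : 1 < r := hr.1
    have hr0 : 0 < r := lt_trans one_pos hr1
    have hri0 : 0 < r⁻¹ := by positivity
    have hri1 : r⁻¹ < 1 := by
      rw [inv_lt_one_iff₀]; right; exact hr1
    have hsri : s < r⁻¹ := by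
      have h := inv_strictAnti₀ hr0 hr.2
      rwa [inv_inv] at h
    have h1s : 1 < 1 / s := one_lt_one_div hs0 hs1
    -- the four poles
    have cast_ne : ∀ x y : ℝ, x ≠ y → (x : ℂ) ≠ (y : ℂ) := fun x y h h' => h (by exact_mod_cast h')
    have hq : -(1 / (s : ℂ)) = ((-(1 / s) : ℝ) : ℂ) := by push_cast; ring
    have hb : -((r⁻¹ : ℝ) : ℂ) = ((-r⁻¹ : ℝ) : ℂ) := by push_cast; ring
    have hp : -((s : ℝ) : ℂ) = ((-s : ℝ) : ℂ) := by push_cast; ring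
    have hab : ((r⁻¹ : ℝ) : ℂ) ≠ -((r⁻¹ : ℝ) : ℂ) := by
      rw [hb]; exact cast_ne _ _ (by intro h; nlinarith)
    have hap : ((r⁻¹ : ℝ) : ℂ) ≠ -((s : ℝ) : ℂ) := by
      rw [hp]; exact cast_ne _ _ (by intro h; nlinarith)
    have haq : ((r⁻¹ : ℝ) : ℂ) ≠ -(1 / (s : ℂ)) := by
      rw [hq]; exact cast_ne _ _ (by intro h; nlinarith)
    have hbp : -((r⁻¹ : ℝ) : ℂ) ≠ -((s : ℝ) : ℂ) := by
      rw [hb, hp]; exact cast_ne _ _ (by intro h; nlinarith)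
    have hbq : -((r⁻¹ : ℝ) : ℂ) ≠ -(1 / (s : ℂ)) := by
      rw [hb, hq]; exact cast_ne _ _ (by intro h; nlinarith)
    have hpq : -((s : ℝ) : ℂ) ≠ -(1 / (s : ℂ)) := by
      rw [hp, hq]; exact cast_ne _ _ (by intro h; nlinarith)
    -- coefficients
    set A1 : ℂ := 1 / (u : ℂ) * (((r⁻¹ : ℝ) : ℂ) ^ 2 /
      ((((r⁻¹ : ℝ) : ℂ) - -((r⁻¹ : ℝ) : ℂ)) * (((r⁻¹ : ℝ) : ℂ) - -((s : ℝ) : ℂ)) *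
        (((r⁻¹ : ℝ) : ℂ) - -(1 / (s : ℂ))))) with hA1
    set A2 : ℂ := 1 / (u : ℂ) * ((-((r⁻¹ : ℝ) : ℂ)) ^ 2 /
      (((-((r⁻¹ : ℝ) : ℂ)) - ((r⁻¹ : ℝ) : ℂ)) * ((-((r⁻¹ : ℝ) : ℂ)) - -((s : ℝ) : ℂ)) *
        ((-((r⁻¹ : ℝ) : ℂ)) - -(1 / (s : ℂ))))) with hA2
    set A3 : ℂ := 1 / (u : ℂ) * ((-((s : ℝ) : ℂ)) ^ 2 /
      (((-((s : ℝ) : ℂ)) - ((r⁻¹ : ℝ) : ℂ)) * ((-((s : ℝ) : ℂ)) - -((r⁻¹ : ℝ) : ℂ)) *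
        ((-((s : ℝ) : ℂ)) - -(1 / (s : ℂ))))) with hA3
    set A4 : ℂ := 1 / (u : ℂ) * ((-(1 / (s : ℂ))) ^ 2 /
      (((-(1 / (s : ℂ))) - ((r⁻¹ : ℝ) : ℂ)) * ((-(1 / (s : ℂ))) - -((r⁻¹ : ℝ) : ℂ)) *
        ((-(1 / (s : ℂ))) - -((s : ℝ) : ℂ)))) with hA4
    have hEq : Set.EqOn
        (fun z : ℂ => (1 / (1 + (‖1 + (u : ℂ) * z‖ ^ 2 : ℝ)) : ℂ) *
              z / (z ^ 2 - ((r : ℂ) ^ 2)⁻¹))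
        (fun z : ℂ => A1 / (z - ((r⁻¹ : ℝ) : ℂ)) + A2 / (z - -((r⁻¹ : ℝ) : ℂ))
          + A3 / (z - -((s : ℝ) : ℂ)) + A4 / (z - -(1 / (s : ℂ))))
        (Metric.sphere 0 1) := by
      intro z hz
      have hz1 : ‖z‖ = 1 := by
        simpa using mem_sphere_zero_iff_norm.1 hz
      have zne : ∀ x : ℝ, |x| ≠ 1 → z ≠ (x : ℂ) := by
        intro x hx h
        exact hx (by rw [← Real.norm_eq_abs, ← Complex.norm_real, ← h, hz1])
      have hza : z ≠ ((r⁻¹ : ℝ) : ℂ) := zne _ (by rw [abs_of_pos hri0]; linarith)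
      have hzb : z ≠ -((r⁻¹ : ℝ) : ℂ) := by
        rw [hb]; exact zne _ (by rw [abs_neg, abs_of_pos hri0]; linarith)
      have hzp : z ≠ -((s : ℝ) : ℂ) := by
        rw [hp]; exact zne _ (by rw [abs_neg, abs_of_pos hs0]; linarith)
      have hzq : z ≠ -(1 / (s : ℂ)) := by
        rw [hq]; exact zne _ (by rw [abs_neg, abs_of_pos (by positivity)]; linarith)
      dsimp only
      rw [show ((r : ℂ) ^ 2)⁻¹ = ((r⁻¹ : ℝ) : ℂ) ^ 2 by rw [Complex.ofReal_inv, inv_pow]]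
      rw [integrand_eq u s r⁻¹ hu0 hs0 hs1 hkey hri0 hri1 hsri z hz1]
      rw [pf4 ((r⁻¹ : ℝ) : ℂ) (-((r⁻¹ : ℝ) : ℂ)) (-((s : ℝ) : ℂ)) (-(1 / (s : ℂ))) z
        hab hap haq hbp hbq hpq hza hzb hzp hzq]
      rw [hA1, hA2, hA3, hA4]
      ring
    have habsa : ‖((r⁻¹ : ℝ) : ℂ)‖ = r⁻¹ := by
      rw [Complex.norm_real, Real.norm_eq_abs, abs_of_pos hri0]
    have habsb : ‖-((r⁻¹ : ℝ) : ℂ)‖ = r⁻¹ := by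
      rw [hb, Complex.norm_real, Real.norm_eq_abs, abs_neg, abs_of_pos hri0]
    have habsp : ‖-((s : ℝ) : ℂ)‖ = s := by
      rw [hp, Complex.norm_real, Real.norm_eq_abs, abs_neg, abs_of_pos hs0]
    have habsq : ‖-(1 / (s : ℂ))‖ = 1 / s := by
      rw [hq, Complex.norm_real, Real.norm_eq_abs, abs_neg, abs_of_pos (by positivity)]
    have hviaint : (∮ z in C(0, 1),
        (1 / (1 + (‖1 + (u : ℂ) * z‖ ^ 2 : ℝ)) : ℂ) *
          z / (z ^ 2 - ((r : ℂ) ^ 2)⁻¹)) = 2 * Real.pi * Complex.I * gfun u s ((r : ℂ))⁻¹ := by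
      rw [circleIntegral.integral_congr zero_le_one hEq]
      have i1 := myci A1 _ (by rw [habsa]; exact ne_of_lt hri1)
      have i2 := myci A2 _ (by rw [habsb]; exact ne_of_lt hri1)
      have i3 := myci A3 _ (by rw [habsp]; exact ne_of_lt hs1)
      have i4 := myci A4 _ (by rw [habsq]; exact ne_of_gt h1s)
      have i12 : CircleIntegrable
          (fun z => A1 / (z - ((r⁻¹ : ℝ) : ℂ)) + A2 / (z - -((r⁻¹ : ℝ) : ℂ))) 0 1 := i1.add i2
      have i123 : CircleIntegrable
          (fun z => A1 / (z - ((r⁻¹ : ℝ) : ℂ)) + A2 / (z - -((r⁻¹ : ℝ) : ℂ))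
            + A3 / (z - -((s : ℝ) : ℂ))) 0 1 := i12.add i3
      rw [myintegral_add i123 i4, myintegral_add i12 i3,
        myintegral_add i1 i2,
        myint_inside A1 _ (by rw [habsa]; exact hri1),
        myint_inside A2 _ (by rw [habsb]; exact hri1),
        myint_inside A3 _ (by rw [habsp]; exact hs1),
        myint_outside A4 _ (by rw [habsq]; exact h1s)]
      rw [show ((r : ℂ))⁻¹ = ((r⁻¹ : ℝ) : ℂ) from by rw [Complex.ofReal_inv]]
      rw [gfun, hA1, hA2, hA3]
      ring
    rw [hviaint, ← mul_assoc, one_div, inv_mul_cancel₀ h2piI, one_mul]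
  have hlim := limit_part u s hu0 hs0 hs1
  have hfin := hlim.congr' hev
  rw [hT] at *
  rwa [← hT] at hfin
end
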